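/- Let M be a matroid with finite ground set E, rank(M) = r ≥ 1, let k ≥ 0 be an integer, and let B ⊆ E be a set of size k + r. Then B is a k-fault-tolerant basis of M if and only if B is r-uniform. -/

import Mathlib

open Set

/-- The rank of a set `X` in a matroid `M`: the maximum cardinality of an
independent subset of `X`. -/
noncomputable def mrank {α : Type*} (M : Matroid α) (X : Set α) : ℕ :=
  sSup {n : ℕ | ∃ I, M.Indep I ∧ I ⊆ X ∧ I.ncard = n}

/-- `B` is a `k`-fault-tolerant spanning set of `M`: `B ⊆ M.E` and removing any
at most `k` elements from `B` leaves a set of full rank. -/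
def FTSpanning {α : Type*} (M : Matroid α) (k : ℕ) (B : Set α) : Prop :=
  B ⊆ M.E ∧ ∀ F ⊆ B, F.ncard ≤ k → mrank M (B \ F) = mrank M M.E

/-- `B` is a `k`-fault-tolerant basis of `M`: a `k`-fault-tolerant spanning set of
minimum cardinality among all `k`-fault-tolerant spanning sets. -/
def FTBasis {α : Type*} (M : Matroid α) (k : ℕ) (B : Set α) : Prop :=
  FTSpanning M k B ∧ ∀ B', FTSpanning M k B' → B.ncard ≤ B'.ncard

/-- `X` is `h`-uniform in `M`: `rank(X) = h` and every subset of `X` of size `h`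
has rank `h`. -/
def HUniform {α : Type*} (M : Matroid α) (h : ℕ) (X : Set α) : Prop :=
  mrank M X = h ∧ ∀ Y ⊆ X, Y.ncard = h → mrank M Y = h

/-!
Write `r` for the rank of `M`. Deleting at most `k` elements from a set of size `k + r`
leaves a set of size at least `r`, and every such set of rank `r` contains a subset of
size exactly `r` and rank `r`; so a set of size `k + r` is `k`-fault-tolerant spanning
exactly when it is `r`-uniform. Such sets are automatically of minimum size: in a
`k`-fault-tolerant spanning set `B`, deleting all of `B` outside a basis `I` together with
one element of `I` leaves rank `r - 1`, so those `|B| - r + 1` elements exceed `k`.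
-/

namespace ENat
lemma sSup_setOf_natCast_le (e : ℕ∞) : sSup {n : ℕ | (n : ℕ∞) ≤ e} = e.toNat := by
  induction e with
  | top =>
    -- both sides are junk `0`: an unbounded `sSup` in `ℕ`, and `⊤.toNat`
    refine Nat.sSup_of_not_bddAbove fun ⟨m, hm⟩ => ?_
    simpa using hm (le_top (a := ((m + 1 : ℕ) : ℕ∞)))
  | coe m => simp only [Nat.cast_le, ENat.toNat_natCast]; exact csSup_Iic
end ENat

section

variable {α : Type*} {M : Matroid α} {X Y I B : Set α} {k : ℕ}

lemma exists_indep_subset_ncard_eq_iff_le_eRk {n : ℕ} :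
    (∃ I, M.Indep I ∧ I ⊆ X ∧ I.ncard = n) ↔ (n : ℕ∞) ≤ M.eRk X := by
  rw [Matroid.le_eRk_iff]
  constructor
  · rintro ⟨I, hI, hIX, rfl⟩
    rcases I.finite_or_infinite with hfin | hinf
    · exact ⟨I, hIX, hI, hfin.cast_ncard_eq.symm⟩
    · exact ⟨∅, empty_subset X, M.empty_indep, by simp [hinf.ncard]⟩
  · rintro ⟨I, hIX, hI, hcard⟩
    exact ⟨I, hI, hIX, by simp [ncard_def, hcard]⟩

lemma mrank_eq_toNat_eRk (M : Matroid α) (X : Set α) : mrank M X = (M.eRk X).toNat := by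
  simp_rw [mrank, exists_indep_subset_ncard_eq_iff_le_eRk, ENat.sSup_setOf_natCast_le]

lemma Matroid.IsBasis'.mrank_eq_ncard (hI : M.IsBasis' I X) : mrank M X = I.ncard := by
  rw [mrank_eq_toNat_eRk, hI.eRk_eq_encard, ncard_def]

lemma Matroid.Indep.mrank_eq_ncard (hI : M.Indep I) : mrank M I = I.ncard :=
  hI.isBasis_self.isBasis'.mrank_eq_ncard

lemma mrank_mono (hY : M.IsRkFinite Y) (hXY : X ⊆ Y) : mrank M X ≤ mrank M Y := by
  simp only [mrank_eq_toNat_eRk]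
  exact ENat.toNat_le_toNat (M.eRk_mono hXY) hY.eRk_lt_top.ne

lemma ftSpanning_iff_forall_subset (hB : B.Finite) :
    FTSpanning M k B ↔
      B ⊆ M.E ∧ ∀ Y ⊆ B, B.ncard ≤ Y.ncard + k → mrank M Y = mrank M M.E := by
  refine and_congr_right fun _ => ⟨fun h Y hYB hY => ?_, fun h F hFB hF => ?_⟩
  · have hcard := ncard_sdiff hYB (hB.subset hYB)
    rw [← h (B \ Y) sdiff_subset (by omega), sdiff_sdiff_cancel_left hYB]
  · have hcard := ncard_sdiff hFB (hB.subset hFB)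
    have hFle := ncard_le_ncard hFB hB
    exact h (B \ F) sdiff_subset (by omega)

lemma FTSpanning.mrank_eq (hB : FTSpanning M k B) : mrank M B = mrank M M.E := by
  simpa using hB.2 ∅ (empty_subset B) (by simp)

lemma FTSpanning.add_mrank_le_ncard (hB : FTSpanning M k B) (hfin : B.Finite)
    (hM : 1 ≤ mrank M M.E) : k + mrank M M.E ≤ B.ncard := by
  obtain ⟨hBE, hY⟩ := (ftSpanning_iff_forall_subset hfin).1 hB
  obtain ⟨I, hI⟩ := M.exists_isBasis B
  have hIcard : I.ncard = mrank M M.E := by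
    rw [← hI.isBasis'.mrank_eq_ncard, hB.mrank_eq]
  obtain ⟨e, he⟩ := nonempty_of_ncard_ne_zero (s := I) (by omega)
  have hIecard : (I \ {e}).ncard = mrank M M.E - 1 := by
    rw [ncard_sdiff_singleton_of_mem he, hIcard]
  by_contra! hlt
  have := hY (I \ {e}) (sdiff_subset.trans hI.subset) (by omega)
  rw [(hI.indep.subset sdiff_subset).mrank_eq_ncard] at this
  omega

lemma ftSpanning_iff_hUniform [M.RankFinite] (hBE : B ⊆ M.E) (hfin : B.Finite)
    (hB : B.ncard = k + mrank M M.E) :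
    FTSpanning M k B ↔ HUniform M (mrank M M.E) B := by
  rw [ftSpanning_iff_forall_subset hfin]
  constructor
  · rintro ⟨-, hY⟩
    exact ⟨hY B Subset.rfl (by omega), fun Y hYB hYcard => hY Y hYB (by omega)⟩
  · rintro ⟨-, hunif⟩
    refine ⟨hBE, fun Y hYB hYcard => le_antisymm ?_ ?_⟩
    · exact mrank_mono M.isRkFinite_ground (hYB.trans hBE)
    · obtain ⟨Z, hZY, hZcard⟩ := exists_subset_card_eq (s := Y) (n := mrank M M.E) (by omega)
      calc mrank M M.E = mrank M Z := (hunif Z (hZY.trans hYB) hZcard).symm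
        _ ≤ mrank M Y := mrank_mono (M.isRkFinite_set Y) hZY

lemma ftBasis_iff_ftSpanning (hE : M.E.Finite) (hM : 1 ≤ mrank M M.E)
    (hB : B.ncard = k + mrank M M.E) : FTBasis M k B ↔ FTSpanning M k B :=
  ⟨And.left, fun h => ⟨h, fun _ hB' => hB ▸ hB'.add_mrank_le_ncard (hE.subset hB'.1) hM⟩⟩

end

/-- Let `M` be a matroid with finite ground set and rank `r ≥ 1`, `k ≥ 0`,
and `B ⊆ M.E` with `|B| = k + r`. Then `B` is a `k`-fault-tolerant basis of `M` if and
only if `B` is `r`-uniform. -/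
theorem statement5 {α : Type*} (M : Matroid α) (hE : M.E.Finite)
    (r : ℕ) (hr : r = mrank M M.E) (hr1 : 1 ≤ r) (k : ℕ)
    (B : Set α) (hBE : B ⊆ M.E) (hBcard : B.ncard = k + r) :
    FTBasis M k B ↔ HUniform M r B := by
  subst hr
  have : M.Finite := ⟨hE⟩
  rw [ftBasis_iff_ftSpanning hE hr1 hBcard, ftSpanning_iff_hUniform hBE (hE.subset hBE) hBcard]
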